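/- Let S be a Hermitian matrix on ℂ^r and h = exp(S), a positive definite Hermitian matrix. Then log((tr h + tr h⁻¹)/(2r)) ≤ |S| ≤ √r · log(tr h + tr h⁻¹), where |S| = (Σᵢ λᵢ²)^{1/2} is the Frobenius norm of S (λᵢ the eigenvalues of S). -/

import Mathlib

/-!
Diagonalising `S`, both traces become sums over the eigenvalues `λᵢ`, so that
`tr h + tr h⁻¹ = ∑ᵢ (e^{λᵢ} + e^{-λᵢ})`. Each summand lies between `e^{|λᵢ|}` and `2 e^{|λᵢ|}`.
Since `|λᵢ| ≤ |S|`, the sum is at most `2r e^{|S|}`, which is the lower bound; since the sum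
dominates each `e^{|λᵢ|}`, every `|λᵢ|` is at most `log (tr h + tr h⁻¹)`, and summing the squares
gives the upper bound.
-/

open Unitary

namespace Matrix.IsHermitian

variable {n : Type*} [Fintype n] [DecidableEq n]

lemma trace_cfc {𝕜 : Type*} [RCLike 𝕜] {A : Matrix n n 𝕜} (hA : A.IsHermitian) (f : ℝ → ℝ) :
    (cfc f A).trace = ((∑ i, f (hA.eigenvalues i) : ℝ) : 𝕜) := by
  rw [hA.cfc_eq, IsHermitian.cfc, conjStarAlgAut_apply, trace_mul_cycle, coe_star_mul_self]
  simp [trace_diagonal]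

open scoped Matrix.Norms.L2Operator in
lemma trace_exp {A : Matrix n n ℂ} (hA : A.IsHermitian) :
    (NormedSpace.exp A).trace = ∑ i, Real.exp (hA.eigenvalues i) := by
  rw [← CFC.real_exp_eq_normedSpace_exp hA.isSelfAdjoint]
  exact hA.trace_cfc Real.exp

open scoped Matrix.Norms.L2Operator in
lemma trace_inv_exp {A : Matrix n n ℂ} (hA : A.IsHermitian) :
    ((NormedSpace.exp A)⁻¹).trace = ∑ i, Real.exp (-hA.eigenvalues i) := by
  rw [← Matrix.exp_neg, ← CFC.real_exp_eq_normedSpace_exp hA.isSelfAdjoint.neg,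
    ← cfc_comp_neg Real.exp A]
  exact hA.trace_cfc _

end Matrix.IsHermitian

namespace Real

lemma exp_abs_le_exp_add_exp_neg (x : ℝ) : exp |x| ≤ exp x + exp (-x) := by
  rcases abs_cases x with ⟨h, -⟩ | ⟨h, -⟩ <;> rw [h] <;> linarith [exp_pos x, exp_pos (-x)]

lemma exp_add_exp_neg_le_two_mul_exp_abs (x : ℝ) : exp x + exp (-x) ≤ 2 * exp |x| := by
  have := exp_le_exp.mpr (le_abs_self x)
  have := exp_le_exp.mpr (neg_le_abs x)
  linarith

end Real

open Real

section EigenvalueBounds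

variable {ι : Type*} [Fintype ι]

lemma abs_le_sqrt_sum_sq (l : ι → ℝ) (i : ι) : |l i| ≤ √(∑ j, l j ^ 2) :=
  abs_le_sqrt (Finset.single_le_sum (fun j _ => sq_nonneg (l j)) (Finset.mem_univ i))

lemma log_sum_exp_add_sum_exp_neg_div_le_sqrt_sum_sq (l : ι → ℝ) :
    log ((∑ i, exp (l i) + ∑ i, exp (-l i)) / (2 * Fintype.card ι)) ≤ √(∑ i, l i ^ 2) := by
  rcases isEmpty_or_nonempty ι with _ | _
  · simp
  have hcard : (0 : ℝ) < Fintype.card ι := by exact_mod_cast Fintype.card_pos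
  rw [log_le_iff_le_exp (by positivity), div_le_iff₀ (by positivity), ← Finset.sum_add_distrib]
  calc ∑ i, (exp (l i) + exp (-l i))
      ≤ ∑ _i : ι, 2 * exp √(∑ j, l j ^ 2) := Finset.sum_le_sum fun i _ =>
        (exp_add_exp_neg_le_two_mul_exp_abs (l i)).trans
          (by gcongr; exact abs_le_sqrt_sum_sq l i)
    _ = exp √(∑ j, l j ^ 2) * (2 * Fintype.card ι) := by
        rw [Finset.sum_const, Finset.card_univ, nsmul_eq_mul]; ring

lemma abs_le_log_sum_exp_add_sum_exp_neg (l : ι → ℝ) (i : ι) :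
    |l i| ≤ log (∑ j, exp (l j) + ∑ j, exp (-l j)) := by
  have hsummand : exp (l i) + exp (-l i) ≤ ∑ j, exp (l j) + ∑ j, exp (-l j) := by
    rw [← Finset.sum_add_distrib]
    exact Finset.single_le_sum (f := fun j => exp (l j) + exp (-l j)) (fun j _ => by positivity)
      (Finset.mem_univ i)
  have hexp := (exp_abs_le_exp_add_exp_neg (l i)).trans hsummand
  rwa [le_log_iff_exp_le ((exp_pos _).trans_le hexp)]

lemma sqrt_sum_sq_le_sqrt_card_mul_log (l : ι → ℝ) :
    √(∑ i, l i ^ 2) ≤ √(Fintype.card ι) * log (∑ i, exp (l i) + ∑ i, exp (-l i)) := by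
  rcases isEmpty_or_nonempty ι with _ | _
  · simp
  set L := log (∑ i, exp (l i) + ∑ i, exp (-l i))
  have hL : ∀ i, |l i| ≤ L := abs_le_log_sum_exp_add_sum_exp_neg l
  have hL0 : 0 ≤ L := (abs_nonneg _).trans (hL (Classical.arbitrary ι))
  calc √(∑ i, l i ^ 2) ≤ √(∑ _i : ι, L ^ 2) :=
        sqrt_le_sqrt <| Finset.sum_le_sum fun i _ =>
          sq_le_sq.mpr ((hL i).trans_eq (abs_of_nonneg hL0).symm)
    _ = √(Fintype.card ι) * L := by
        rw [Finset.sum_const, Finset.card_univ, nsmul_eq_mul, sqrt_mul (by positivity), sqrt_sq hL0]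

end EigenvalueBounds

theorem stmt0_general {r : ℕ} (S : Matrix (Fin r) (Fin r) ℂ)
    (hS : S.IsHermitian) :
    Real.log ((((NormedSpace.exp S).trace).re + (((NormedSpace.exp S)⁻¹).trace).re) / (2 * r))
        ≤ Real.sqrt (∑ i, hS.eigenvalues i ^ 2) ∧
      Real.sqrt (∑ i, hS.eigenvalues i ^ 2)
        ≤ Real.sqrt r *
          Real.log (((NormedSpace.exp S).trace).re + (((NormedSpace.exp S)⁻¹).trace).re) := by
  rw [hS.trace_exp, hS.trace_inv_exp, Complex.ofReal_re, Complex.ofReal_re]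
  constructor
  · simpa only [Fintype.card_fin] using
      log_sum_exp_add_sum_exp_neg_div_le_sqrt_sum_sq hS.eigenvalues
  · simpa only [Fintype.card_fin] using sqrt_sum_sq_le_sqrt_card_mul_log hS.eigenvalues

/-- For a Hermitian matrix `S` on `ℂ^r` with `h = exp S`,
`log((tr h + tr h⁻¹)/(2r)) ≤ |S|_F ≤ √r · log(tr h + tr h⁻¹)`, where the
Frobenius norm of `S` is the ℓ² norm of its eigenvalues. -/
theorem stmt0 {r : ℕ} (hr : 0 < r) (S : Matrix (Fin r) (Fin r) ℂ)
    (hS : S.IsHermitian) :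
    Real.log ((((NormedSpace.exp S).trace).re + (((NormedSpace.exp S)⁻¹).trace).re) / (2 * r))
        ≤ Real.sqrt (∑ i, hS.eigenvalues i ^ 2) ∧
      Real.sqrt (∑ i, hS.eigenvalues i ^ 2)
        ≤ Real.sqrt r *
          Real.log (((NormedSpace.exp S).trace).re + (((NormedSpace.exp S)⁻¹).trace).re) :=
  stmt0_general S hS
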